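/- For ℓ = 1 and β₁ = β₁^(1) = (√(s/ω)+1)(√(s/ω)+2)/2, the function V(x) = sech^{√(s/ω)}(√ω x)·tanh(√ω x) is a bounded nonzero solution of -V'' + sV - β₁ U₀(x)² V = 0, where U₀(x) = √(2ω) sech(√ω x). -/

import Mathlib

/-!
For `f = sech^κ · tanh`, two differentiations and `tanh² = 1 - sech²` give the Pöschl–Teller
identity `f'' = (κ² - (κ+1)(κ+2) sech²) f`. Since `V(x) = f(√ω x)`, `s = κ² ω` and
`β₁ U₀(x)² = (κ+1)(κ+2) ω sech²(√ω x)`, this is exactly the equation for `V`.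
-/

open Real

namespace Real

theorem hasDerivAt_tanh (y : ℝ) : HasDerivAt tanh (1 - tanh y ^ 2) y := by
  have hc : cosh y ≠ 0 := (cosh_pos y).ne'
  have h : HasDerivAt (fun y => sinh y / cosh y) _ y :=
    (hasDerivAt_sinh y).div (hasDerivAt_cosh y) hc
  rw [tanh_eq_sinh_div_cosh,
    show tanh = fun y => sinh y / cosh y from funext tanh_eq_sinh_div_cosh]
  refine h.congr_deriv ?_
  field_simp

theorem tanh_sq_eq_one_sub_inv_cosh_sq (y : ℝ) : tanh y ^ 2 = 1 - (cosh y)⁻¹ ^ 2 := by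
  have hc : cosh y ≠ 0 := (cosh_pos y).ne'
  rw [tanh_eq_sinh_div_cosh]
  field_simp
  linear_combination -cosh_sq_sub_sinh_sq y

theorem hasDerivAt_inv_cosh_rpow (κ y : ℝ) :
    HasDerivAt (fun y => (cosh y)⁻¹ ^ κ) (-κ * ((cosh y)⁻¹ ^ κ * tanh y)) y := by
  have hc : cosh y ≠ 0 := (cosh_pos y).ne'
  have h : HasDerivAt (fun y => (cosh y)⁻¹ ^ κ) _ y :=
    ((hasDerivAt_cosh y).inv hc).rpow_const (p := κ) (Or.inl (inv_ne_zero hc))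
  refine h.congr_deriv ?_
  rw [Pi.inv_apply, rpow_sub_one (inv_ne_zero hc), tanh_eq_sinh_div_cosh]
  field_simp

end Real

noncomputable def sechPowTanh (κ y : ℝ) : ℝ := (cosh y)⁻¹ ^ κ * tanh y

theorem hasDerivAt_sechPowTanh (κ y : ℝ) :
    HasDerivAt (sechPowTanh κ) ((cosh y)⁻¹ ^ κ * (1 - (κ + 1) * tanh y ^ 2)) y := by
  have h : HasDerivAt (fun y => (cosh y)⁻¹ ^ κ * tanh y) _ y :=
    (hasDerivAt_inv_cosh_rpow κ y).mul (hasDerivAt_tanh y)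
  exact h.congr_deriv (by ring)

theorem deriv_sechPowTanh (κ : ℝ) :
    deriv (sechPowTanh κ) = fun y => (cosh y)⁻¹ ^ κ * (1 - (κ + 1) * tanh y ^ 2) :=
  funext fun y => (hasDerivAt_sechPowTanh κ y).deriv

theorem deriv_deriv_sechPowTanh (κ y : ℝ) :
    deriv (deriv (sechPowTanh κ)) y =
      (κ ^ 2 - (κ + 1) * (κ + 2) * (cosh y)⁻¹ ^ 2) * sechPowTanh κ y := by
  have h : HasDerivAt (fun y => (cosh y)⁻¹ ^ κ * (1 - (κ + 1) * tanh y ^ 2)) _ y :=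
    (hasDerivAt_inv_cosh_rpow κ y).mul
      ((((hasDerivAt_tanh y).pow 2).const_mul (κ + 1)).const_sub 1)
  rw [deriv_sechPowTanh, h.deriv, sechPowTanh]
  linear_combination
    (κ + 1) * (κ + 2) * (cosh y)⁻¹ ^ κ * tanh y * tanh_sq_eq_one_sub_inv_cosh_sq y

theorem deriv_deriv_comp_mul_left {𝕜 : Type*} [NontriviallyNormedField 𝕜] (f : 𝕜 → 𝕜)
    (a x : 𝕜) :
    deriv (deriv fun x => f (a * x)) x = a ^ 2 * deriv (deriv f) (a * x) := by
  have h : deriv (fun x => f (a * x)) = fun x => a * deriv f (a * x) :=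
    funext fun x => deriv_comp_mul_left a f x
  rw [h, deriv_const_mul_field, deriv_comp_mul_left, smul_eq_mul]
  ring

theorem abs_sechPowTanh_le_one {κ : ℝ} (hκ : 0 ≤ κ) (y : ℝ) : |sechPowTanh κ y| ≤ 1 := by
  have hsech : 0 ≤ (cosh y)⁻¹ := inv_nonneg.mpr (cosh_pos y).le
  have hpow : (cosh y)⁻¹ ^ κ ≤ 1 :=
    rpow_le_one hsech (inv_le_one_of_one_le₀ (one_le_cosh y)) hκ
  rw [sechPowTanh, abs_mul, abs_of_nonneg (rpow_nonneg hsech κ)]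
  exact mul_le_one₀ hpow (abs_nonneg _) (abs_tanh_lt_one y).le

theorem sechPowTanh_pos (κ : ℝ) {y : ℝ} (hy : 0 < y) : 0 < sechPowTanh κ y := by
  have hc := cosh_pos y
  rw [sechPowTanh, tanh_eq_sinh_div_cosh]
  exact mul_pos (rpow_pos_of_pos (inv_pos.mpr hc) κ)
    (div_pos (sinh_pos_iff.mpr hy) hc)

/-- For `ℓ = 1` and `β₁ = β₁⁽¹⁾ = (κ+1)(κ+2)/2` with `κ = √(s/ω)`, the function
`V(x) = sech^κ(√ω x)·tanh(√ω x)` is a bounded nonzero solution of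
`-V'' + sV - β₁U₀²V = 0`. -/
theorem stmt_10 (ω s : ℝ) (hω : 0 < ω) (hs : 0 < s)
    (κ : ℝ) (hκ : κ = Real.sqrt (s / ω))
    (β₁ : ℝ) (hβ₁ : β₁ = (κ + 1) * (κ + 2) / 2)
    (U₀ : ℝ → ℝ) (hU₀ : ∀ x, U₀ x = Real.sqrt (2 * ω) * (Real.cosh (Real.sqrt ω * x))⁻¹)
    (V : ℝ → ℝ)
    (hV : ∀ x, V x = ((Real.cosh (Real.sqrt ω * x))⁻¹) ^ κ * Real.tanh (Real.sqrt ω * x)) :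
    (∀ x, -(deriv (deriv V)) x + s * V x - β₁ * (U₀ x) ^ 2 * V x = 0) ∧
    (∃ C : ℝ, ∀ x, |V x| ≤ C) ∧ V ≠ 0 := by
  have hVf : V = fun x => sechPowTanh κ (√ω * x) := funext hV
  have hκ0 : 0 ≤ κ := hκ ▸ sqrt_nonneg _
  have hs_eq : s = κ ^ 2 * ω := by
    rw [hκ, sq_sqrt (div_nonneg hs.le hω.le)]
    field_simp
  refine ⟨fun x => ?_, ⟨1, fun x => hVf ▸ abs_sechPowTanh_le_one hκ0 _⟩, fun hV0 => ?_⟩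
  · rw [hVf, deriv_deriv_comp_mul_left, deriv_deriv_sechPowTanh, hU₀, hβ₁, hs_eq, mul_pow,
      sq_sqrt (by positivity : 0 ≤ 2 * ω), sq_sqrt hω.le]
    ring
  · have hV1 : sechPowTanh κ √ω = 0 := by simpa [hVf] using congrFun hV0 1
    exact (sechPowTanh_pos κ (sqrt_pos.mpr hω)).ne' hV1
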